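/- arXiv:1810.10859 — 9 statements merged into one kernel-verified Lean document; each statement's English description precedes it below -/
import Mathlib

section
/- For every real number k ≥ 1 and all mass functions m1, m2, m3 on Ω, Σ_{A⊆Ω} |q_{m1 ⊚∩ m3}(A) − q_{m2 ⊚∩ m3}(A)|^k ≤ Σ_{A⊆Ω} |q_{m1}(A) − q_{m2}(A)|^k. Consequently the L_k norm based distance between commonality functions is 1-Lipschitz with respect to conjunctive combination with a fixed mass function. -/
open Finset

/-- A mass function on a finite frame `Ω`: nonnegative and sums to one over all subsets. -/
def IsMass {Ω : Type*} [Fintype Ω] (m : Finset Ω → ℝ) : Prop :=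
  (∀ A, 0 ≤ m A) ∧ ∑ A : Finset Ω, m A = 1

/-- Commonality (inclusion functional): `q m A = ∑_{E ⊇ A} m E`. -/
def commonality {Ω : Type*} [Fintype Ω] [DecidableEq Ω] (m : Finset Ω → ℝ) (A : Finset Ω) : ℝ :=
  ∑ E : Finset Ω, if A ⊆ E then m E else 0

/-- Plausibility (hitting functional): `pl m A = ∑_{E ∩ A ≠ ∅} m E`. -/
def plaus {Ω : Type*} [Fintype Ω] [DecidableEq Ω] (m : Finset Ω → ℝ) (A : Finset Ω) : ℝ :=
  ∑ E : Finset Ω, if E ∩ A ≠ ∅ then m E else 0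

/-- Implicability: `b m A = ∑_{E ⊆ A} m E`. -/
def implic {Ω : Type*} [Fintype Ω] [DecidableEq Ω] (m : Finset Ω → ℝ) (A : Finset Ω) : ℝ :=
  ∑ E : Finset Ω, if E ⊆ A then m E else 0

/-- Conjunctive combination: `(m1 ⊚∩ m2)(E) = ∑_{A ∩ B = E} m1 A * m2 B`. -/
def conjC {Ω : Type*} [Fintype Ω] [DecidableEq Ω] (m1 m2 : Finset Ω → ℝ) (E : Finset Ω) : ℝ :=
  ∑ A : Finset Ω, ∑ B : Finset Ω, if A ∩ B = E then m1 A * m2 B else 0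

/-- Disjunctive combination: `(m1 ⊚∪ m2)(E) = ∑_{A ∪ B = E} m1 A * m2 B`. -/
def disjC {Ω : Type*} [Fintype Ω] [DecidableEq Ω] (m1 m2 : Finset Ω → ℝ) (E : Finset Ω) : ℝ :=
  ∑ A : Finset Ω, ∑ B : Finset Ω, if A ∪ B = E then m1 A * m2 B else 0

/-- Categorical mass function `m_A`. -/
def categorical {Ω : Type*} [Fintype Ω] [DecidableEq Ω] (A : Finset Ω) : Finset Ω → ℝ :=
  fun E => if E = A then 1 else 0

/-! Commonality turns conjunctive combination into a pointwise product, so the `A`-th term on the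
left is `|q₁ A - q₂ A| ^ k * q₃ A ^ k`; as `0 ≤ q₃ A ≤ 1` and `k ≥ 0`, the factor `q₃ A ^ k` is at
most `1`, and the inequality holds termwise. -/

lemma commonality_conjC {Ω : Type*} [Fintype Ω] [DecidableEq Ω]
    (m1 m2 : Finset Ω → ℝ) (A : Finset Ω) :
    commonality (conjC m1 m2) A = commonality m1 A * commonality m2 A := by
  calc commonality (conjC m1 m2) A
      = ∑ E with A ⊆ E, ∑ B, ∑ C, if B ∩ C = E then m1 B * m2 C else 0 := by
        rw [commonality, sum_filter]; rfl
    _ = ∑ B, ∑ C, ∑ E with A ⊆ E, if B ∩ C = E then m1 B * m2 C else 0 := by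
        rw [sum_comm]; exact sum_congr rfl fun _ _ => sum_comm
    _ = ∑ B, ∑ C, if A ⊆ B ∩ C then m1 B * m2 C else 0 := by
        simp only [sum_ite_eq, mem_filter, mem_univ, true_and]
    _ = commonality m1 A * commonality m2 A := by
        simp only [commonality, sum_mul_sum, ite_zero_mul_ite_zero, subset_inter_iff]

lemma commonality_nonneg {Ω : Type*} [Fintype Ω] [DecidableEq Ω]
    {m : Finset Ω → ℝ} (hm : 0 ≤ m) (A : Finset Ω) : 0 ≤ commonality m A :=
  sum_nonneg fun E _ => by split_ifs; exacts [hm E, le_rfl]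

lemma commonality_le_sum {Ω : Type*} [Fintype Ω] [DecidableEq Ω]
    {m : Finset Ω → ℝ} (hm : 0 ≤ m) (A : Finset Ω) : commonality m A ≤ ∑ E, m E :=
  sum_le_sum fun E _ => by split_ifs; exacts [le_rfl, hm E]

lemma abs_mul_rpow_le_of_le_one {a c k : ℝ} (hk : 0 ≤ k) (hc₀ : 0 ≤ c) (hc₁ : c ≤ 1) :
    |a * c| ^ k ≤ |a| ^ k := by
  rw [abs_mul, abs_of_nonneg hc₀, Real.mul_rpow (abs_nonneg a) hc₀]
  exact mul_le_of_le_one_right (Real.rpow_nonneg (abs_nonneg a) k) (Real.rpow_le_one hc₀ hc₁ hk)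

theorem lk_commonality_conj_nonexpansive_general {Ω : Type*} [Fintype Ω] [DecidableEq Ω]
    (k : ℝ) (hk : 1 ≤ k) (m1 m2 m3 : Finset Ω → ℝ)
    (h3 : IsMass m3) :
    ∑ A : Finset Ω, |commonality (conjC m1 m3) A - commonality (conjC m2 m3) A| ^ k ≤
      ∑ A : Finset Ω, |commonality m1 A - commonality m2 A| ^ k := by
  have hm3 : 0 ≤ m3 := h3.1
  refine sum_le_sum fun A _ => ?_
  rw [commonality_conjC, commonality_conjC, ← sub_mul]
  exact abs_mul_rpow_le_of_le_one (zero_le_one.trans hk) (commonality_nonneg hm3 A)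
    (h3.2 ▸ commonality_le_sum hm3 A)

/-- For every real `k ≥ 1` and mass functions `m1, m2, m3`,
`∑_{A⊆Ω} |q_{m1 ⊚∩ m3}(A) − q_{m2 ⊚∩ m3}(A)|^k ≤ ∑_{A⊆Ω} |q_{m1}(A) − q_{m2}(A)|^k`,
i.e. the `L_k` distance between commonalities is 1-Lipschitz w.r.t. conjunctive
combination with a fixed mass function. -/
theorem lk_commonality_conj_nonexpansive {Ω : Type*} [Fintype Ω] [DecidableEq Ω]
    (k : ℝ) (hk : 1 ≤ k) (m1 m2 m3 : Finset Ω → ℝ)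
    (h1 : IsMass m1) (h2 : IsMass m2) (h3 : IsMass m3) :
    ∑ A : Finset Ω, |commonality (conjC m1 m3) A - commonality (conjC m2 m3) A| ^ k ≤
      ∑ A : Finset Ω, |commonality m1 A - commonality m2 A| ^ k :=
  lk_commonality_conj_nonexpansive_general k hk m1 m2 m3 h3
end

section
/- For all mass functions m1, m2, m3 on Ω, max_{A⊆Ω} |pl_{m1 ⊚∩ m3}(A) − pl_{m2 ⊚∩ m3}(A)| ≤ max_{A⊆Ω} |pl_{m1}(A) − pl_{m2}(A)|. Consequently the L_∞ norm based distance between plausibility functions is 1-Lipschitz with respect to conjunctive combination with a fixed mass function. -/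
open Finset

lemma plaus_conjC_eq {Ω : Type*} [Fintype Ω] [DecidableEq Ω] (m m3 : Finset Ω → ℝ)
    (A : Finset Ω) :
    plaus (conjC m m3) A = ∑ B : Finset Ω, m3 B * plaus m (B ∩ A) := by
  unfold plaus conjC
  have : ∀ E : Finset Ω,
      (if E ∩ A ≠ ∅ then ∑ C : Finset Ω, ∑ B : Finset Ω,
          (if C ∩ B = E then m C * m3 B else 0) else 0)
      = ∑ C : Finset Ω, ∑ B : Finset Ω,
          (if C ∩ B = E then (if E ∩ A ≠ ∅ then m C * m3 B else 0) else 0) := by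
    intro E
    split
    · rfl
    · simp
  simp only [this]
  rw [Finset.sum_comm]
  have h2 : ∀ C : Finset Ω,
      (∑ E : Finset Ω, ∑ B : Finset Ω,
          (if C ∩ B = E then (if E ∩ A ≠ ∅ then m C * m3 B else 0) else 0))
      = ∑ B : Finset Ω, (if C ∩ B ∩ A ≠ ∅ then m C * m3 B else 0) := by
    intro C
    rw [Finset.sum_comm]
    refine Finset.sum_congr rfl fun B _ => ?_
    rw [Finset.sum_ite_eq]
    simp
  simp only [h2]
  rw [Finset.sum_comm]
  refine Finset.sum_congr rfl fun B _ => ?_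
  rw [Finset.mul_sum]
  refine Finset.sum_congr rfl fun C _ => ?_
  rw [Finset.inter_assoc]
  split <;> ring

/-- For all mass functions `m1, m2, m3`,
`max_{A⊆Ω} |pl_{m1 ⊚∩ m3}(A) − pl_{m2 ⊚∩ m3}(A)| ≤ max_{A⊆Ω} |pl_{m1}(A) − pl_{m2}(A)|`,
i.e. the `L_∞` distance between plausibilities is 1-Lipschitz w.r.t. conjunctive
combination with a fixed mass function. -/
theorem linf_plaus_conj_nonexpansive {Ω : Type*} [Fintype Ω] [DecidableEq Ω]
    (m1 m2 m3 : Finset Ω → ℝ) (h1 : IsMass m1) (h2 : IsMass m2) (h3 : IsMass m3) :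
    (Finset.univ : Finset (Finset Ω)).sup' Finset.univ_nonempty
        (fun A => |plaus (conjC m1 m3) A - plaus (conjC m2 m3) A|) ≤
      (Finset.univ : Finset (Finset Ω)).sup' Finset.univ_nonempty
        (fun A => |plaus m1 A - plaus m2 A|) := by
  set M := (Finset.univ : Finset (Finset Ω)).sup' Finset.univ_nonempty
      (fun A => |plaus m1 A - plaus m2 A|) with hM
  apply Finset.sup'_le
  intro A _
  rw [plaus_conjC_eq, plaus_conjC_eq, ← Finset.sum_sub_distrib]
  calc |∑ B : Finset Ω, (m3 B * plaus m1 (B ∩ A) - m3 B * plaus m2 (B ∩ A))|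
      ≤ ∑ B : Finset Ω, |m3 B * plaus m1 (B ∩ A) - m3 B * plaus m2 (B ∩ A)| :=
        Finset.abs_sum_le_sum_abs _ _
    _ ≤ ∑ B : Finset Ω, m3 B * M := by
        refine Finset.sum_le_sum fun B _ => ?_
        rw [← mul_sub, abs_mul, abs_of_nonneg (h3.1 B)]
        refine mul_le_mul_of_nonneg_left ?_ (h3.1 B)
        exact Finset.le_sup' (fun A => |plaus m1 A - plaus m2 A|) (Finset.mem_univ (B ∩ A))
    _ = M := by rw [← Finset.sum_mul, h3.2, one_mul]
end

section
/- For every real number k ≥ 1 and all mass functions m1, m2, m3 on Ω, Σ_{A⊆Ω} |pl_{m1 ⊚∪ m3}(A) − pl_{m2 ⊚∪ m3}(A)|^k ≤ Σ_{A⊆Ω} |pl_{m1}(A) − pl_{m2}(A)|^k. Consequently the L_k norm based distance between plausibility functions is 1-Lipschitz with respect to disjunctive combination with a fixed mass function. -/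
/-!
Writing `pl_m(A) = ∑ m − b_m(Aᶜ)` and using `b_{m ⊚∪ m₃} = b_m · b_{m₃}`, the difference
`pl_{m₁ ⊚∪ m₃}(A) − pl_{m₂ ⊚∪ m₃}(A)` equals `(pl_{m₁}(A) − pl_{m₂}(A)) · b_{m₃}(Aᶜ)` as soon as
`m₁` and `m₂` have the same total mass. Since `0 ≤ b_{m₃} ≤ 1`, the inequality holds termwise.
-/

open Finset

section

variable {Ω : Type*} [Fintype Ω] [DecidableEq Ω]

lemma plaus_eq_sum_sub_implic_compl (m : Finset Ω → ℝ) (A : Finset Ω) :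
    plaus m A = ∑ E : Finset Ω, m E - implic m Aᶜ := by
  rw [eq_sub_iff_add_eq, plaus, implic, ← sum_add_distrib]
  refine sum_congr rfl fun E _ => ?_
  have hdisj : E ∩ A = ∅ ↔ E ⊆ Aᶜ := by
    rw [← disjoint_iff_inter_eq_empty, subset_compl_iff_disjoint_right]
  by_cases hEA : E ⊆ Aᶜ <;> simp [hdisj, hEA]

lemma sum_disjC_mul (m1 m2 f : Finset Ω → ℝ) :
    ∑ E : Finset Ω, disjC m1 m2 E * f E =
      ∑ A : Finset Ω, ∑ B : Finset Ω, m1 A * m2 B * f (A ∪ B) := by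
  simp only [disjC, sum_mul, ite_mul, zero_mul]
  rw [sum_comm]
  refine sum_congr rfl fun A _ => ?_
  rw [sum_comm]
  exact sum_congr rfl fun B _ => sum_ite_eq _ _ _ |>.trans (if_pos (mem_univ _))

lemma sum_disjC (m1 m2 : Finset Ω → ℝ) :
    ∑ E : Finset Ω, disjC m1 m2 E = (∑ A : Finset Ω, m1 A) * ∑ B : Finset Ω, m2 B := by
  simpa [sum_mul_sum] using sum_disjC_mul m1 m2 1

lemma implic_disjC (m1 m2 : Finset Ω → ℝ) (A : Finset Ω) :
    implic (disjC m1 m2) A = implic m1 A * implic m2 A := by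
  have h := sum_disjC_mul m1 m2 fun E => if E ⊆ A then 1 else 0
  simp only [mul_ite, mul_one, mul_zero, union_subset_iff, ite_and] at h
  rw [implic, h, implic, implic, sum_mul_sum]
  refine sum_congr rfl fun B _ => sum_congr rfl fun C _ => ?_
  split_ifs <;> simp

lemma implic_nonneg {m : Finset Ω → ℝ} (hm : ∀ E, 0 ≤ m E) (A : Finset Ω) : 0 ≤ implic m A :=
  sum_nonneg fun E _ => by split_ifs <;> simp [hm E]

lemma implic_le_one {m : Finset Ω → ℝ} (hm : IsMass m) (A : Finset Ω) : implic m A ≤ 1 :=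
  hm.2 ▸ sum_le_sum fun E _ => by split_ifs <;> simp [hm.1 E]

lemma plaus_disjC_sub_plaus_disjC {m1 m2 : Finset Ω → ℝ}
    (hsum : ∑ E : Finset Ω, m1 E = ∑ E : Finset Ω, m2 E) (m : Finset Ω → ℝ) (A : Finset Ω) :
    plaus (disjC m1 m) A - plaus (disjC m2 m) A = (plaus m1 A - plaus m2 A) * implic m Aᶜ := by
  simp only [plaus_eq_sum_sub_implic_compl, sum_disjC, implic_disjC, hsum]
  ring

end

/-- For every real `k ≥ 1` and mass functions `m1, m2, m3`,
`∑_{A⊆Ω} |pl_{m1 ⊚∪ m3}(A) − pl_{m2 ⊚∪ m3}(A)|^k ≤ ∑_{A⊆Ω} |pl_{m1}(A) − pl_{m2}(A)|^k`,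
i.e. the `L_k` distance between plausibilities is 1-Lipschitz w.r.t. disjunctive
combination with a fixed mass function. -/
theorem lk_plaus_disj_nonexpansive {Ω : Type*} [Fintype Ω] [DecidableEq Ω]
    (k : ℝ) (hk : 1 ≤ k) (m1 m2 m3 : Finset Ω → ℝ)
    (h1 : IsMass m1) (h2 : IsMass m2) (h3 : IsMass m3) :
    ∑ A : Finset Ω, |plaus (disjC m1 m3) A - plaus (disjC m2 m3) A| ^ k ≤
      ∑ A : Finset Ω, |plaus m1 A - plaus m2 A| ^ k := by
  refine sum_le_sum fun A _ => Real.rpow_le_rpow (abs_nonneg _) ?_ (by linarith)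
  rw [plaus_disjC_sub_plaus_disjC (h1.2.trans h2.2.symm), abs_mul,
    abs_of_nonneg (implic_nonneg h3.1 _)]
  exact mul_le_of_le_one_right (abs_nonneg _) (implic_le_one h3 _)
end

section
/- For all mass functions m1, m2, m3 on Ω, max_{A⊆Ω} |q_{m1 ⊚∪ m3}(A) − q_{m2 ⊚∪ m3}(A)| ≤ max_{A⊆Ω} |q_{m1}(A) − q_{m2}(A)|. Consequently the L_∞ norm based distance between commonality functions is 1-Lipschitz with respect to disjunctive combination with a fixed mass function. -/
open Finset

/-!
Disjunctive combination with `m₃` turns commonalities into `m₃`-averages: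
`q_{m ⊚∪ m₃}(A) = ∑_B m₃(B) q_m(A \ B)`, because `A ⊆ C ∪ B ↔ A \ B ⊆ C`. Hence the difference
of the two combined commonalities at `A` is a convex combination of differences
`q_{m₁}(A \ B) - q_{m₂}(A \ B)`, each bounded in absolute value by the `L_∞` distance.
-/

theorem abs_sum_mul_le_of_isMass {Ω : Type*} [Fintype Ω] {w f : Finset Ω → ℝ} (hw : IsMass w)
    {M : ℝ} (hf : ∀ B, |f B| ≤ M) : |∑ B, w B * f B| ≤ M :=
  calc |∑ B, w B * f B| ≤ ∑ B, w B * M := by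
        refine (abs_sum_le_sum_abs _ _).trans (sum_le_sum fun B _ => ?_)
        rw [abs_mul, abs_of_nonneg (hw.1 B)]
        exact mul_le_mul_of_nonneg_left (hf B) (hw.1 B)
    _ = M := by rw [← sum_mul, hw.2, one_mul]

section

variable {Ω : Type*} [Fintype Ω] [DecidableEq Ω]

theorem sum_mul_disjC (m₁ m₂ φ : Finset Ω → ℝ) :
    ∑ E, φ E * disjC m₁ m₂ E = ∑ C, ∑ B, φ (C ∪ B) * (m₁ C * m₂ B) := by
  simp only [disjC, mul_sum]
  rw [sum_comm]
  refine sum_congr rfl fun C _ => ?_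
  rw [sum_comm]
  refine sum_congr rfl fun B _ => ?_
  simp only [mul_ite, mul_zero, sum_ite_eq, mem_univ, if_true]

theorem commonality_eq_sum_indicator_mul (m : Finset Ω → ℝ) (A : Finset Ω) :
    commonality m A = ∑ E, (if A ⊆ E then 1 else 0) * m E := by
  simp only [commonality, ite_mul, one_mul, zero_mul]

theorem commonality_disjC (m m₃ : Finset Ω → ℝ) (A : Finset Ω) :
    commonality (disjC m m₃) A = ∑ B, m₃ B * commonality m (A \ B) := by
  rw [commonality_eq_sum_indicator_mul, sum_mul_disjC, sum_comm]
  refine sum_congr rfl fun B _ => ?_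
  simp only [commonality, mul_sum]
  refine sum_congr rfl fun C _ => ?_
  have hsub : A ⊆ C ∪ B ↔ A \ B ⊆ C := by rw [union_comm]; exact sdiff_le_iff.symm
  simp only [hsub]
  split_ifs <;> ring

end

theorem linf_commonality_disj_nonexpansive_general {Ω : Type*} [Fintype Ω] [DecidableEq Ω]
    (m1 m2 m3 : Finset Ω → ℝ) (h3 : IsMass m3) :
    (Finset.univ : Finset (Finset Ω)).sup' Finset.univ_nonempty
        (fun A => |commonality (disjC m1 m3) A - commonality (disjC m2 m3) A|) ≤
      (Finset.univ : Finset (Finset Ω)).sup' Finset.univ_nonempty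
        (fun A => |commonality m1 A - commonality m2 A|) := by
  refine sup'_le _ _ fun A _ => ?_
  rw [commonality_disjC, commonality_disjC, ← sum_sub_distrib]
  simp only [← mul_sub]
  exact abs_sum_mul_le_of_isMass h3 fun B =>
    le_sup' (fun A => |commonality m1 A - commonality m2 A|) (mem_univ (A \ B))

/-- For all mass functions `m1, m2, m3`,
`max_{A⊆Ω} |q_{m1 ⊚∪ m3}(A) − q_{m2 ⊚∪ m3}(A)| ≤ max_{A⊆Ω} |q_{m1}(A) − q_{m2}(A)|`,
i.e. the `L_∞` distance between commonalities is 1-Lipschitz w.r.t. disjunctive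
combination with a fixed mass function. -/
theorem linf_commonality_disj_nonexpansive {Ω : Type*} [Fintype Ω] [DecidableEq Ω]
    (m1 m2 m3 : Finset Ω → ℝ) (h1 : IsMass m1) (h2 : IsMass m2) (h3 : IsMass m3) :
    (Finset.univ : Finset (Finset Ω)).sup' Finset.univ_nonempty
        (fun A => |commonality (disjC m1 m3) A - commonality (disjC m2 m3) A|) ≤
      (Finset.univ : Finset (Finset Ω)).sup' Finset.univ_nonempty
        (fun A => |commonality m1 A - commonality m2 A|) :=
  linf_commonality_disj_nonexpansive_general m1 m2 m3 h3
end

section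
/- For every mass function m on Ω and all subsets A, E ⊆ Ω, the implicability function of the conditioning of m given E satisfies b_{m ⊚∩ m_E}(A) = b_m((E\A)ᶜ) = b_m(Eᶜ ∪ A), where complements are taken in Ω. -/
/-! Conditioning on `E` moves the mass of each focal set `B` to `B ∩ E`, and
`B ∩ E ⊆ A` holds exactly when `B ⊆ (E \ A)ᶜ = Eᶜ ∪ A`. -/

open Finset

theorem conjC_categorical_apply {Ω : Type*} [Fintype Ω] [DecidableEq Ω]
    (m : Finset Ω → ℝ) (E F : Finset Ω) :
    conjC m (categorical E) F = ∑ B : Finset Ω, if B ∩ E = F then m B else 0 := by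
  refine sum_congr rfl fun B _ => ?_
  rw [sum_eq_single E (fun C _ hC => by simp [categorical, hC]) (by simp)]
  simp [categorical]

theorem implic_conjC_categorical {Ω : Type*} [Fintype Ω] [DecidableEq Ω]
    (m : Finset Ω → ℝ) (A E : Finset Ω) :
    implic (conjC m (categorical E)) A = ∑ B : Finset Ω, if B ∩ E ⊆ A then m B else 0 := by
  simp only [implic, conjC_categorical_apply, ← sum_filter]
  rw [← sum_fiberwise_of_maps_to (s := {B | B ∩ E ⊆ A}) (t := {F | F ⊆ A}) (g := (· ∩ E))
    (by simp)]
  refine sum_congr rfl fun F hF => ?_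
  rw [filter_filter]
  exact sum_congr (filter_congr fun B _ => by simp_all +contextual) fun _ _ => rfl

theorem Finset.inter_subset_iff_subset_compl_sdiff {α : Type*} [Fintype α] [DecidableEq α]
    (B E A : Finset α) : B ∩ E ⊆ A ↔ B ⊆ (E \ A)ᶜ := by
  rw [compl_sdiff]
  exact le_himp_iff.symm

theorem implic_conditioning_general {Ω : Type*} [Fintype Ω] [DecidableEq Ω]
    (m : Finset Ω → ℝ) (A E : Finset Ω) :
    implic (conjC m (categorical E)) A = implic m ((E \ A)ᶜ) ∧
      implic (conjC m (categorical E)) A = implic m (Eᶜ ∪ A) := by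
  have h_sdiff : implic (conjC m (categorical E)) A = implic m ((E \ A)ᶜ) := by
    rw [implic_conjC_categorical, implic]
    simp only [Finset.inter_subset_iff_subset_compl_sdiff]
  refine ⟨h_sdiff, ?_⟩
  rw [h_sdiff, compl_sdiff, himp_eq, sup_comm, sup_eq_union]

/-- For every mass function `m` and subsets `A, E ⊆ Ω`, the implicability of
the conditioning of `m` given `E` satisfies
`b_{m ⊚∩ m_E}(A) = b_m((E \ A)ᶜ) = b_m(Eᶜ ∪ A)`. -/
theorem implic_conditioning {Ω : Type*} [Fintype Ω] [DecidableEq Ω]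
    (m : Finset Ω → ℝ) (hm : IsMass m) (A E : Finset Ω) :
    implic (conjC m (categorical E)) A = implic m ((E \ A)ᶜ) ∧
      implic (conjC m (categorical E)) A = implic m (Eᶜ ∪ A) :=
  implic_conditioning_general m A E
end

section
/- Let Ω be a finite set with |Ω| = n and N = 2^n, and let k ≥ 1 be a real number. For all subsets A, B ⊆ Ω, Σ_{E⊆Ω} |q_{m_A}(E) − q_{m_B}(E)|^k ≤ N − 1, and this bound is attained for A = Ω and B = ∅. Hence the diameter of the mass space under the L_k norm based distance between commonality functions is (N−1)^{1/k}. -/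
open Finset

lemma comm_cat {Ω : Type*} [Fintype Ω] [DecidableEq Ω] (A E : Finset Ω) :
    commonality (categorical A) E = if E ⊆ A then 1 else 0 := by
  classical
  simp only [commonality, categorical]
  have h : ∀ F : Finset Ω, (if E ⊆ F then (if F = A then (1:ℝ) else 0) else 0)
      = if F = A then (if E ⊆ A then 1 else 0) else 0 := by
    intro F; by_cases h : F = A <;> simp [h]
  simp_rw [h, Finset.sum_ite_eq' Finset.univ A, Finset.mem_univ, if_true]

/-- With `N = 2^n`, for all `A, B ⊆ Ω`,
`∑_{E⊆Ω} |q_{m_A}(E) − q_{m_B}(E)|^k ≤ N − 1`, with equality for `A = Ω`, `B = ∅`;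
hence the diameter of the mass space under the `L_k` commonality distance is `(N−1)^{1/k}`. -/
theorem commonality_lk_diameter {Ω : Type*} [Fintype Ω] [DecidableEq Ω]
    (k : ℝ) (hk : 1 ≤ k) :
    (∀ A B : Finset Ω,
      ∑ E : Finset Ω, |commonality (categorical A) E - commonality (categorical B) E| ^ k ≤
        2 ^ (Fintype.card Ω) - 1) ∧
    ∑ E : Finset Ω,
        |commonality (categorical (Finset.univ : Finset Ω)) E -
          commonality (categorical (∅ : Finset Ω)) E| ^ k =
      2 ^ (Fintype.card Ω) - 1 := by
  classical
  have hk0 : k ≠ 0 := by linarith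
  have hterm : ∀ (A B : Finset Ω) (E : Finset Ω),
      |commonality (categorical A) E - commonality (categorical B) E| ^ k
        = if (E ⊆ A ∧ ¬ E ⊆ B) ∨ (¬ E ⊆ A ∧ E ⊆ B) then 1 else 0 := by
    intro A B E
    rw [comm_cat, comm_cat]
    by_cases h1 : E ⊆ A <;> by_cases h2 : E ⊆ B <;>
      simp [h1, h2, Real.zero_rpow hk0, Real.one_rpow]
  have hcard : (Finset.univ : Finset (Finset Ω)).card = 2 ^ Fintype.card Ω := by
    simp [Finset.card_univ]
  constructor
  · intro A B
    have hsplit : (Finset.univ : Finset (Finset Ω)) = insert ∅ (Finset.univ.erase ∅) := by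
      rw [Finset.insert_erase (Finset.mem_univ _)]
    rw [hsplit, Finset.sum_insert (Finset.notMem_erase _ _)]
    have h0 : |commonality (categorical A) ∅ - commonality (categorical B) ∅| ^ k = 0 := by
      rw [hterm]; simp
    rw [h0, zero_add]
    calc ∑ E ∈ Finset.univ.erase ∅,
          |commonality (categorical A) E - commonality (categorical B) E| ^ k
        ≤ ∑ _E ∈ Finset.univ.erase ∅, (1:ℝ) := by
          apply Finset.sum_le_sum
          intro E _
          rw [hterm]
          split <;> norm_num
      _ = 2 ^ Fintype.card Ω - 1 := by
          rw [Finset.sum_const, Finset.card_erase_of_mem (Finset.mem_univ _), hcard]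
          simp [nsmul_eq_mul, Nat.cast_sub Nat.one_le_two_pow]
  · have h : ∀ E : Finset Ω,
        |commonality (categorical (Finset.univ : Finset Ω)) E -
          commonality (categorical (∅ : Finset Ω)) E| ^ k = if E = ∅ then 0 else 1 := by
      intro E
      rw [hterm]
      by_cases hE : E = ∅ <;> simp [hE, Finset.subset_empty, Finset.subset_univ]
    simp_rw [h]
    rw [Finset.sum_ite, Finset.sum_const, Finset.sum_const, Finset.filter_ne',
      Finset.card_erase_of_mem (Finset.mem_univ _), hcard]
    simp [nsmul_eq_mul, Nat.cast_sub Nat.one_le_two_pow]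
end

section
/- Let Ω be a finite set with |Ω| = n and N = 2^n, and let k ≥ 1 be a real number. For all subsets A, B ⊆ Ω, Σ_{E⊆Ω} |pl_{m_A}(E) − pl_{m_B}(E)|^k ≤ N − 1, and this bound is attained for A = Ω and B = ∅. Hence the diameter of the mass space under the L_k norm based distance between plausibility functions is (N−1)^{1/k}. -/
open Finset

lemma sum_ite_empty {Ω : Type*} [Fintype Ω] [DecidableEq Ω] :
    ∑ E : Finset Ω, (if E = ∅ then (0:ℝ) else 1) = 2 ^ (Fintype.card Ω) - 1 := by
  have h : ∀ E : Finset Ω, (if E = ∅ then (0:ℝ) else 1) = 1 - (if E = ∅ then 1 else 0) := by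
    intro E; split_ifs <;> ring
  simp_rw [h, Finset.sum_sub_distrib, Finset.sum_const,
    Finset.sum_ite_eq' Finset.univ (∅ : Finset Ω) (fun _ => (1:ℝ))]
  simp [Fintype.card_finset]

lemma plaus_cat {Ω : Type*} [Fintype Ω] [DecidableEq Ω] (A E : Finset Ω) :
    plaus (categorical A) E = if A ∩ E ≠ ∅ then 1 else 0 := by
  unfold plaus categorical
  rw [show (∑ F : Finset Ω, if F ∩ E ≠ ∅ then (if F = A then (1:ℝ) else 0) else 0)
      = ∑ F : Finset Ω, if F = A then (if A ∩ E ≠ ∅ then (1:ℝ) else 0) else 0 from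
    Finset.sum_congr rfl (by intro F _; by_cases h : F = A <;> simp [h])]
  simp

/-- With `N = 2^n`, for all `A, B ⊆ Ω`,
`∑_{E⊆Ω} |pl_{m_A}(E) − pl_{m_B}(E)|^k ≤ N − 1`, with equality for `A = Ω`, `B = ∅`;
hence the diameter of the mass space under the `L_k` plausibility distance is `(N−1)^{1/k}`. -/
theorem plaus_lk_diameter {Ω : Type*} [Fintype Ω] [DecidableEq Ω]
    (k : ℝ) (hk : 1 ≤ k) :
    (∀ A B : Finset Ω,
      ∑ E : Finset Ω, |plaus (categorical A) E - plaus (categorical B) E| ^ k ≤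
        2 ^ (Fintype.card Ω) - 1) ∧
    ∑ E : Finset Ω,
        |plaus (categorical (Finset.univ : Finset Ω)) E -
          plaus (categorical (∅ : Finset Ω)) E| ^ k =
      2 ^ (Fintype.card Ω) - 1 := by
  have hk0 : k ≠ 0 := by positivity
  have key : ∀ A B : Finset Ω, ∀ E : Finset Ω,
      |plaus (categorical A) E - plaus (categorical B) E| ^ k
        = if E = ∅ then 0 else |plaus (categorical A) E - plaus (categorical B) E| ^ k := by
    intro A B E
    by_cases hE : E = ∅
    · simp [hE, plaus_cat, Real.zero_rpow hk0]
    · simp [hE]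
  constructor
  · intro A B
    calc ∑ E : Finset Ω, |plaus (categorical A) E - plaus (categorical B) E| ^ k
        ≤ ∑ E : Finset Ω, if E = ∅ then 0 else 1 := by
          apply Finset.sum_le_sum
          intro E _
          rw [key A B E]
          by_cases hE : E = ∅
          · simp [hE]
          · simp only [hE, if_false]
            rw [plaus_cat, plaus_cat]
            have h1 : |(if A ∩ E ≠ ∅ then (1:ℝ) else 0) - (if B ∩ E ≠ ∅ then (1:ℝ) else 0)| ≤ 1 := by
              split_ifs <;> norm_num
            calc _ ≤ (1:ℝ) ^ k := Real.rpow_le_rpow (abs_nonneg _) h1 (by linarith)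
            _ = 1 := Real.one_rpow k
      _ = 2 ^ (Fintype.card Ω) - 1 := sum_ite_empty
  · calc ∑ E : Finset Ω, |plaus (categorical (univ : Finset Ω)) E - plaus (categorical (∅ : Finset Ω)) E| ^ k
        = ∑ E : Finset Ω, if E = ∅ then 0 else 1 := by
          apply Finset.sum_congr rfl
          intro E _
          by_cases hE : E = ∅
          · simp [hE, plaus_cat, Real.zero_rpow hk0]
          · have : (univ : Finset Ω) ∩ E ≠ ∅ := by simpa [Finset.univ_inter]
            simp [hE, plaus_cat, this, Real.one_rpow]
      _ = 2 ^ (Fintype.card Ω) - 1 := sum_ite_empty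
end

section
/- Let Ω be a nonempty finite set. For all mass functions m1, m2 on Ω, max_{A⊆Ω} |q_{m1 ⊚∩ m2}(A) − q_{m_∅}(A)| = max_{a∈Ω} pl_{m1 ⊚∩ m2}({a}). Consequently the conflict degree C_{q,∞}(m1,m2) = 1 − max_{A⊆Ω} |q_{m1 ⊚∩ m2}(A) − q_{m_∅}(A)| coincides with the degree of strong conflict K(m1,m2) = 1 − max_{a∈Ω} pl_{m1 ⊚∩ m2}({a}). -/
open Finset

/-- For `Ω` nonempty and mass functions `m1, m2`,
`max_{A⊆Ω} |q_{m1 ⊚∩ m2}(A) − q_{m_∅}(A)| = max_{a∈Ω} pl_{m1 ⊚∩ m2}({a})`;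
hence the conflict degree `C_{q,∞}` coincides with the degree of strong conflict `K`. -/
theorem conflict_qinf_eq_strong_conflict {Ω : Type*} [Fintype Ω] [DecidableEq Ω] [Nonempty Ω]
    (m1 m2 : Finset Ω → ℝ) (h1 : IsMass m1) (h2 : IsMass m2) :
    (Finset.univ : Finset (Finset Ω)).sup' Finset.univ_nonempty
        (fun A => |commonality (conjC m1 m2) A - commonality (categorical (∅ : Finset Ω)) A|) =
      (Finset.univ : Finset Ω).sup' Finset.univ_nonempty
        (fun a => plaus (conjC m1 m2) {a}) := by

  classical
  obtain ⟨hn1, hs1⟩ := h1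
  obtain ⟨hn2, hs2⟩ := h2
  set m := conjC m1 m2 with hm
  have hnn : ∀ E, 0 ≤ m E := by
    intro E
    apply Finset.sum_nonneg; intro A _
    apply Finset.sum_nonneg; intro B _
    split
    · exact mul_nonneg (hn1 A) (hn2 B)
    · exact le_refl 0
  have hsum : ∑ E : Finset Ω, m E = 1 := by
    have : ∑ E : Finset Ω, m E
        = ∑ A : Finset Ω, ∑ B : Finset Ω, m1 A * m2 B := by
      simp only [hm, conjC]
      rw [Finset.sum_comm]
      apply Finset.sum_congr rfl; intro A _
      rw [Finset.sum_comm]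
      apply Finset.sum_congr rfl; intro B _
      simp [Finset.sum_ite_eq]
    rw [this]
    rw [← Finset.sum_mul_sum, hs1, hs2, mul_one]
  have hqnn : ∀ A, 0 ≤ commonality m A := by
    intro A
    apply Finset.sum_nonneg; intro E _
    split
    · exact hnn E
    · exact le_refl 0
  have hqanti : ∀ A B : Finset Ω, A ⊆ B → commonality m B ≤ commonality m A := by
    intro A B hAB
    apply Finset.sum_le_sum; intro E _
    split_ifs with h1 h2
    · exact le_refl _
    · exact absurd (hAB.trans h1) h2
    · exact hnn E
    · exact le_refl 0
  have hqempty : commonality m ∅ = 1 := by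
    unfold commonality
    simpa using hsum
  have hcat : ∀ A : Finset Ω, commonality (categorical (∅ : Finset Ω)) A
      = if A = ∅ then 1 else 0 := by
    intro A
    by_cases hA : A = ∅
    · subst hA
      simp [commonality, categorical]
    · simp only [hA, if_neg]
      apply Finset.sum_eq_zero; intro E _
      unfold categorical
      split_ifs with h1 h2
      · exact absurd (h2 ▸ h1 : A ⊆ (∅ : Finset Ω)) (by simpa [Finset.subset_empty] using hA)
      · rfl
      · rfl
  have hsingle : ∀ a : Ω, commonality m {a} = plaus m {a} := by
    intro a
    apply Finset.sum_congr rfl; intro E _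
    congr 1
    simp [Finset.singleton_subset_iff, Finset.eq_empty_iff_forall_notMem]
  have hplnn : ∀ a : Ω, 0 ≤ plaus m {a} := by
    intro a
    apply Finset.sum_nonneg; intro E _
    split
    · exact hnn E
    · exact le_refl 0
  apply le_antisymm
  · apply Finset.sup'_le
    intro A _
    by_cases hA : A = ∅
    · subst hA
      rw [hcat, hqempty]
      have h0 : |(1:ℝ) - if (∅:Finset Ω) = ∅ then (1:ℝ) else 0| = 0 := by simp
      rw [h0]
      obtain ⟨a⟩ := ‹Nonempty Ω›
      exact le_trans (hplnn a)
        (Finset.le_sup' (fun a => plaus m {a}) (Finset.mem_univ a))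
    · obtain ⟨a, ha⟩ := Finset.nonempty_iff_ne_empty.mpr hA
      rw [hcat, if_neg hA, sub_zero, abs_of_nonneg (hqnn A)]
      calc commonality m A ≤ commonality m {a} :=
            hqanti _ _ (Finset.singleton_subset_iff.mpr ha)
        _ = plaus m {a} := hsingle a
        _ ≤ _ := Finset.le_sup' (fun a => plaus m {a}) (Finset.mem_univ a)
  · apply Finset.sup'_le
    intro a _
    have : plaus m {a} = |commonality m {a} - commonality (categorical (∅ : Finset Ω)) {a}| := by
      rw [hcat, if_neg (by simp), sub_zero, abs_of_nonneg (hqnn _), hsingle]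
    rw [this]
    exact Finset.le_sup' (fun A => |commonality m A - commonality (categorical (∅ : Finset Ω)) A|) (Finset.mem_univ ({a} : Finset Ω))
end

section
/- Let Ω be a nonempty finite set. For all mass functions m1, m2 on Ω, max_{B⊆Ω} max_{A⊆Ω} |(m1 ⊚∩ m2 ⊚∩ m_B)(A) − (m_∅)(A)| = 1 − (m1 ⊚∩ m2)(∅). Consequently the conflict degree 1 − d_{spe,∞}(m1 ⊚∩ m2, m_∅), defined as one minus the L_∞ norm based specialization distance between m1 ⊚∩ m2 and m_∅, coincides with Dempster's degree of conflict κ(m1,m2) = (m1 ⊚∩ m2)(∅). -/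
open Finset

/-! Combining with a categorical `m_B` only moves mass from `C` to `C ∩ B`, so `m ⊚∩ m_B` is again a
mass function whose mass on `∅` is at least `m ∅`; for any mass function `μ` one has
`|μ A - m_∅ A| ≤ 1 - μ ∅`, which bounds every entry by `1 - m ∅`. The bound is attained at
`B = Ω, A = ∅`, because `m_Ω` is neutral for `⊚∩`. -/

section

variable {Ω : Type*} [Fintype Ω]

lemma IsMass.sum_le_one {μ : Finset Ω → ℝ} (hμ : IsMass μ) (S : Finset (Finset Ω)) :
    ∑ E ∈ S, μ E ≤ 1 :=
  hμ.2 ▸ sum_le_sum_of_subset_of_nonneg (subset_univ S) fun E _ _ => hμ.1 E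

lemma IsMass.le_one {μ : Finset Ω → ℝ} (hμ : IsMass μ) (A : Finset Ω) : μ A ≤ 1 := by
  simpa using hμ.sum_le_one {A}

variable [DecidableEq Ω]

lemma conjC_categorical (m : Finset Ω → ℝ) (B A : Finset Ω) :
    conjC m (categorical B) A = ∑ C : Finset Ω, if C ∩ B = A then m C else 0 := by
  unfold conjC categorical
  refine sum_congr rfl fun C _ => ?_
  rw [sum_eq_single B (fun D _ hD => by simp [hD]) (by simp)]
  simp

lemma conjC_categorical_univ (m : Finset Ω → ℝ) : conjC m (categorical univ) = m := by
  ext A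
  simp [conjC_categorical]

lemma isMass_categorical (B : Finset Ω) : IsMass (categorical B) := by
  refine ⟨fun A => ?_, by simp [categorical]⟩
  unfold categorical
  split_ifs <;> norm_num

lemma isMass_conjC {m1 m2 : Finset Ω → ℝ} (h1 : IsMass m1) (h2 : IsMass m2) :
    IsMass (conjC m1 m2) := by
  refine ⟨fun E => sum_nonneg fun A _ => sum_nonneg fun B _ => ?_, ?_⟩
  · split_ifs
    exacts [mul_nonneg (h1.1 A) (h2.1 B), le_rfl]
  · have collapse (A : Finset Ω) :
        ∑ E : Finset Ω, ∑ B : Finset Ω, (if A ∩ B = E then m1 A * m2 B else 0) =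
          m1 A * ∑ B : Finset Ω, m2 B := by
      rw [sum_comm, mul_sum]
      simp
    unfold conjC
    rw [sum_comm]
    simp_rw [collapse, h2.2, mul_one, h1.2]

lemma le_conjC_categorical_empty {m : Finset Ω → ℝ} (hm : ∀ A, 0 ≤ m A) (B : Finset Ω) :
    m ∅ ≤ conjC m (categorical B) ∅ := by
  rw [conjC_categorical]
  simpa using single_le_sum (f := fun C : Finset Ω => if C ∩ B = ∅ then m C else 0)
    (fun C _ => by split_ifs; exacts [hm C, le_rfl]) (mem_univ ∅)

lemma IsMass.abs_sub_categorical_empty_self {μ : Finset Ω → ℝ} (hμ : IsMass μ) :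
    |μ ∅ - categorical (∅ : Finset Ω) ∅| = 1 - μ ∅ := by
  rw [categorical, if_pos rfl, abs_sub_comm, abs_of_nonneg (sub_nonneg.2 (hμ.le_one ∅))]

lemma IsMass.abs_sub_categorical_empty_le {μ : Finset Ω → ℝ} (hμ : IsMass μ) (A : Finset Ω) :
    |μ A - categorical ∅ A| ≤ 1 - μ ∅ := by
  by_cases hA : A = ∅
  · exact hA ▸ hμ.abs_sub_categorical_empty_self.le
  · have := hμ.sum_le_one {A, ∅}
    rw [sum_pair hA] at this
    simp only [categorical, hA, if_false, sub_zero, abs_of_nonneg (hμ.1 A)]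
    linarith

end

theorem conflict_spe_inf_eq_dempster_general {Ω : Type*} [Fintype Ω] [DecidableEq Ω]
    (m1 m2 : Finset Ω → ℝ) (h1 : IsMass m1) (h2 : IsMass m2) :
    (Finset.univ : Finset (Finset Ω)).sup' Finset.univ_nonempty
        (fun B => (Finset.univ : Finset (Finset Ω)).sup' Finset.univ_nonempty
          (fun A => |conjC (conjC m1 m2) (categorical B) A - categorical (∅ : Finset Ω) A|)) =
      1 - conjC m1 m2 ∅ := by
  set m := conjC m1 m2
  have hm : IsMass m := isMass_conjC h1 h2
  apply le_antisymm
  · refine sup'_le _ _ fun B _ => sup'_le _ _ fun A _ => ?_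
    exact ((isMass_conjC hm (isMass_categorical B)).abs_sub_categorical_empty_le A).trans
      (sub_le_sub_left (le_conjC_categorical_empty hm.1 B) 1)
  · calc 1 - m ∅ = |conjC m (categorical univ) ∅ - categorical (∅ : Finset Ω) ∅| := by
          rw [conjC_categorical_univ, hm.abs_sub_categorical_empty_self]
      _ ≤ _ := le_sup'_of_le _ (mem_univ univ)
          (le_sup' (fun A => |conjC m (categorical univ) A - categorical ∅ A|) (mem_univ ∅))

/-- For `Ω` nonempty and mass functions `m1, m2`,
`max_{B⊆Ω} max_{A⊆Ω} |(m1 ⊚∩ m2 ⊚∩ m_B)(A) − m_∅(A)| = 1 − (m1 ⊚∩ m2)(∅)`;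
hence `1 − d_{spe,∞}(m1 ⊚∩ m2, m_∅)` coincides with Dempster's degree of conflict
`κ(m1,m2) = (m1 ⊚∩ m2)(∅)`. -/
theorem conflict_spe_inf_eq_dempster {Ω : Type*} [Fintype Ω] [DecidableEq Ω] [Nonempty Ω]
    (m1 m2 : Finset Ω → ℝ) (h1 : IsMass m1) (h2 : IsMass m2) :
    (Finset.univ : Finset (Finset Ω)).sup' Finset.univ_nonempty
        (fun B => (Finset.univ : Finset (Finset Ω)).sup' Finset.univ_nonempty
          (fun A => |conjC (conjC m1 m2) (categorical B) A - categorical (∅ : Finset Ω) A|)) =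
      1 - conjC m1 m2 ∅ :=
  conflict_spe_inf_eq_dempster_general m1 m2 h1 h2
end
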